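/- Let r ≥ 2 and n ≥ r, and let G' be a graph on n vertices that is K_{r+1}-free and has the largest r-clique spectral radius among all K_{r+1}-free graphs on n vertices (i.e., ρ_r(G') ≥ ρ_r(H) for every K_{r+1}-free graph H on n vertices). Then G' is r-clique connected. -/

import Mathlib

open Finset

/-- The finset of all `r`-cliques (sets of `r` pairwise adjacent vertices) of `G`. -/
noncomputable def rCliques {V : Type*} [Fintype V] [DecidableEq V]
    (G : SimpleGraph V) (r : ℕ) : Finset (Finset V) :=
  letI := Classical.decPred (fun K : Finset V => G.IsNClique r K)
  Finset.univ.filter (fun K => G.IsNClique r K)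

/-- The `r`-clique spectral radius of `G`: the supremum over nonnegative vectors `x`
with `∑ v, x v ^ r = 1` of `r * ∑_{K an r-clique} ∏_{i ∈ K} x i`. -/
noncomputable def cliqueSpecRad {V : Type*} [Fintype V] [DecidableEq V]
    (G : SimpleGraph V) (r : ℕ) : ℝ :=
  sSup { y : ℝ | ∃ x : V → ℝ, (∀ v, 0 ≤ x v) ∧ (∑ v, x v ^ r) = 1 ∧
    y = r * ∑ K ∈ rCliques G r, ∏ i ∈ K, x i }


/-- `G` is `r`-clique connected: any two vertices are joined by a sequence of `r`-cliques
in which consecutive cliques share a vertex. -/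
def CliqueConnected {V : Type*} [DecidableEq V] (G : SimpleGraph V) (r : ℕ) : Prop :=
  ∀ u v : V, ∃ (m : ℕ) (K : Fin (m + 1) → Finset V),
    (∀ i, G.IsNClique r (K i)) ∧ u ∈ K 0 ∧ v ∈ K (Fin.last m) ∧
      ∀ i : Fin m, (K i.castSucc ∩ K i.succ).Nonempty

/-!
Let `x` maximize `P(x) = ∑_{K an r-clique} ∏_{i ∈ K} x i` on the nonnegative part of the unit
`ℓ^r`-sphere, so that `r P(x) = ρ_r(G')`. The Turán graph `T(n, r)` shows `ρ_r(G') ≥ 1`, so some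
`r`-clique `K` carries positive weight; fix `w ∈ K` and let `S` be the `r`-clique component of `w`.
Every `r`-clique lies inside `S` or inside its complement, hence `P(x)` splits along `S`, and
since neither part can beat `ρ_r(G') · ‖·‖_r^r`, the restriction `x|_S` is again extremal.
If some `u` lay outside `S`, replace `u` by a non-adjacent twin of `w` (this keeps the graph
`K_{r+1}`-free) and give both `u` and `w` the weight `x w / 2^{1/r}`: the `ℓ^r`-norm is unchanged,
while every clique through `w` now occurs twice with its weight scaled by `2^{-1/r}`, a net gain by
the factor `2^{1-1/r} > 1`. The new graph would have a larger `r`-clique spectral radius.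
-/

open SimpleGraph

variable {V : Type*} {G : SimpleGraph V} {r : ℕ}

section CliqueChain

def CliqueAdj (G : SimpleGraph V) (r : ℕ) (a b : V) : Prop :=
  ∃ K : Finset V, G.IsNClique r K ∧ a ∈ K ∧ b ∈ K

instance : Std.Symm (CliqueAdj G r) :=
  ⟨fun _ _ ⟨K, hK, ha, hb⟩ => ⟨K, hK, hb, ha⟩⟩

variable [DecidableEq V]

lemma exists_cliqueChain_of_transGen {u v : V} (h : Relation.TransGen (CliqueAdj G r) u v) :
    ∃ (m : ℕ) (K : Fin (m + 1) → Finset V),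
      (∀ i, G.IsNClique r (K i)) ∧ u ∈ K 0 ∧ v ∈ K (Fin.last m) ∧
        ∀ i : Fin m, (K i.castSucc ∩ K i.succ).Nonempty := by
  induction h with
  | single huv =>
    obtain ⟨L, hL, hu, hv⟩ := huv
    exact ⟨0, fun _ => L, fun _ => hL, hu, hv, Fin.elim0⟩
  | @tail b c _ hbc ih =>
    obtain ⟨m, K, hK, hu, hb, hKK⟩ := ih
    obtain ⟨L, hL, hb', hc⟩ := hbc
    refine ⟨m + 1, Fin.snoc K L, fun i => ?_,
      by rw [← Fin.castSucc_zero, Fin.snoc_castSucc]; exact hu, by simpa using hc, fun i => ?_⟩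
    · induction i using Fin.lastCases <;> simp [hL, hK]
    · induction i using Fin.lastCases with
      | last => exact ⟨b, by simpa using And.intro hb hb'⟩
      | cast i => rw [Fin.succ_castSucc, Fin.snoc_castSucc, Fin.snoc_castSucc]; exact hKK i

lemma cliqueConnected_of_transGen (w : V) (h : ∀ v, Relation.TransGen (CliqueAdj G r) w v) :
    CliqueConnected G r := fun u v =>
  exists_cliqueChain_of_transGen ((symm (h u)).trans (h v))

end CliqueChain

section CliquePoly

variable [Fintype V] [DecidableEq V] {x : V → ℝ} {K : Finset V}

noncomputable def cliquePoly (G : SimpleGraph V) (r : ℕ) (x : V → ℝ) : ℝ :=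
  ∑ K ∈ rCliques G r, ∏ i ∈ K, x i

lemma mem_rCliques : K ∈ rCliques G r ↔ G.IsNClique r K := by
  classical simp [rCliques]

lemma cliquePoly_smul (c : ℝ) (x : V → ℝ) :
    cliquePoly G r (c • x) = c ^ r * cliquePoly G r x := by
  rw [cliquePoly, cliquePoly, mul_sum]
  refine sum_congr rfl fun K hK => ?_
  simp only [Pi.smul_apply, smul_eq_mul, prod_mul_distrib, prod_const, (mem_rCliques.1 hK).card_eq]

lemma prod_le_cliquePoly (hx : 0 ≤ x) (hK : G.IsNClique r K) : ∏ i ∈ K, x i ≤ cliquePoly G r x :=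
  single_le_sum (f := fun K => ∏ i ∈ K, x i) (fun _ _ => prod_nonneg fun i _ => hx i)
    (mem_rCliques.2 hK)

lemma isGreatest_cliqueSpecRad [Nonempty V] (hr : r ≠ 0) :
    IsGreatest {y | ∃ x : V → ℝ, (∀ v, 0 ≤ x v) ∧ (∑ v, x v ^ r) = 1 ∧
      y = r * cliquePoly G r x} (cliqueSpecRad G r) := by
  set C : Set (V → ℝ) := Set.Ici 0 ∩ {x | ∑ v, x v ^ r = 1}
  have hC : IsCompact C := by
    refine (isCompact_univ_pi fun _ => isCompact_Icc (a := (0 : ℝ)) (b := 1)).of_isClosed_subset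
      (isClosed_Ici.inter (isClosed_eq (by fun_prop) continuous_const)) ?_
    rintro x ⟨hx, hsum⟩ v -
    refine ⟨hx v, (pow_le_one_iff_of_nonneg (hx v) hr).1 ?_⟩
    rw [← hsum]
    exact single_le_sum (f := fun v => x v ^ r) (fun i _ => pow_nonneg (hx i) r) (mem_univ v)
  have hCne : C.Nonempty := by
    obtain ⟨v⟩ := ‹Nonempty V›
    refine ⟨Pi.single v 1, Pi.single_nonneg.2 zero_le_one, ?_⟩
    exact (Fintype.sum_eq_single v fun w hw => by simp [hw, hr]).trans (by simp)
  have hS : {y | ∃ x : V → ℝ, (∀ v, 0 ≤ x v) ∧ (∑ v, x v ^ r) = 1 ∧ y = r * cliquePoly G r x} =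
      (fun x => r * cliquePoly G r x) '' C := by
    ext y
    exact ⟨fun ⟨x, h0, h1, hy⟩ => ⟨x, ⟨h0, h1⟩, hy.symm⟩,
      fun ⟨x, ⟨h0, h1⟩, hy⟩ => ⟨x, h0, h1, hy.symm⟩⟩
  obtain ⟨y, hy⟩ := (hC.image (by unfold cliquePoly; fun_prop :
    Continuous fun x : V → ℝ => (r : ℝ) * cliquePoly G r x)).exists_isGreatest (hCne.image _)
  rw [← hS] at hy
  rwa [show cliqueSpecRad G r = y from hy.csSup_eq]

lemma exists_mul_cliquePoly_eq [Nonempty V] (hr : r ≠ 0) :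
    ∃ x : V → ℝ, 0 ≤ x ∧ ∑ v, x v ^ r = 1 ∧ r * cliquePoly G r x = cliqueSpecRad G r := by
  obtain ⟨x, hx0, hx1, hx⟩ := (isGreatest_cliqueSpecRad (G := G) hr).1
  exact ⟨x, hx0, hx1, hx.symm⟩

lemma mul_cliquePoly_le (hr : r ≠ 0) (hx : 0 ≤ x) :
    r * cliquePoly G r x ≤ cliqueSpecRad G r * ∑ v, x v ^ r := by
  rcases (sum_nonneg fun v _ => pow_nonneg (hx v) r : 0 ≤ ∑ v, x v ^ r).eq_or_lt with hσ | hσ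
  · have hx0 : x = 0 := funext fun v => pow_eq_zero_iff hr |>.1 <|
      (sum_eq_zero_iff_of_nonneg fun v _ => pow_nonneg (hx v) r).1 hσ.symm v (mem_univ v)
    have h0 := cliquePoly_smul (G := G) (r := r) 0 x
    rw [zero_smul, zero_pow hr, zero_mul] at h0
    rw [← hσ, hx0, h0, mul_zero, mul_zero]
  · set σ := ∑ v, x v ^ r
    obtain ⟨v, -, -⟩ := exists_ne_zero_of_sum_ne_zero hσ.ne'
    have : Nonempty V := ⟨v⟩
    set c : ℝ := (σ ^ (r⁻¹ : ℝ))⁻¹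
    have hc0 : 0 ≤ c := by positivity
    have hc : c ^ r = σ⁻¹ := by rw [inv_pow, Real.rpow_inv_natCast_pow hσ.le hr]
    have hle := (isGreatest_cliqueSpecRad (G := G) hr).2
      ⟨c • x, fun v => smul_nonneg hc0 (hx v), ?_, rfl⟩
    · rw [cliquePoly_smul, hc, ← mul_assoc, mul_comm _ σ⁻¹, mul_assoc] at hle
      rw [inv_mul_le_iff₀ hσ] at hle
      linarith
    · simp only [Pi.smul_apply, smul_eq_mul, mul_pow, ← mul_sum, hc]
      exact inv_mul_cancel₀ hσ.ne'

lemma one_le_cliqueSpecRad_of_not_cliqueFree (hr : r ≠ 0) (hG : ¬ G.CliqueFree r) :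
    1 ≤ cliqueSpecRad G r := by
  obtain ⟨K, hK⟩ : ∃ K, G.IsNClique r K := by simpa [CliqueFree] using hG
  set x : V → ℝ := Set.indicator (K : Set V) (fun _ => (1 : ℝ))
  have hx : 0 ≤ x := Set.indicator_nonneg fun _ _ => zero_le_one
  have hsum : ∑ v, x v ^ r = r := by simp [x, Set.indicator_apply, hr, hK.card_eq]
  have hprod : ∏ i ∈ K, x i = 1 := prod_eq_one fun i hi => Set.indicator_of_mem hi _
  have := (mul_le_mul_of_nonneg_left (hprod ▸ prod_le_cliquePoly hx hK) (Nat.cast_nonneg r)).trans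
    (mul_cliquePoly_le hr hx)
  rw [hsum, mul_one] at this
  exact le_of_mul_le_mul_right (by linarith) (by positivity : (0 : ℝ) < r)

lemma cliquePoly_eq_sum_filter_notMem {u : V} (hxu : x u = 0) :
    cliquePoly G r x = ∑ K ∈ (rCliques G r).filter (u ∉ ·), ∏ i ∈ K, x i := by
  refine (sum_filter_of_ne fun K _ h => ?_).symm
  exact fun hu => h (prod_eq_zero hu hxu)

end CliquePoly

section Restriction

variable {x : V → ℝ}

lemma prod_indicator_add_prod_indicator_compl {K : Finset V} (hK : K.Nonempty) {S : Set V}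
    (hKS : ∀ a ∈ K, ∀ b ∈ K, a ∈ S → b ∈ S) :
    ∏ i ∈ K, S.indicator x i + ∏ i ∈ K, Sᶜ.indicator x i = ∏ i ∈ K, x i := by
  obtain ⟨a, ha⟩ := hK
  by_cases haS : a ∈ S
  · rw [prod_eq_zero ha (Set.indicator_of_notMem (Set.notMem_compl_iff.2 haS) x), add_zero]
    exact prod_congr rfl fun b hb => Set.indicator_of_mem (hKS a ha b hb haS) x
  · rw [prod_eq_zero ha (Set.indicator_of_notMem haS x), zero_add]
    exact prod_congr rfl fun b hb =>
      Set.indicator_of_mem (show b ∈ Sᶜ from fun hbS => haS (hKS b hb a ha hbS)) x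

variable [Fintype V] [DecidableEq V]

lemma mul_cliquePoly_indicator_eq (hr : r ≠ 0) {S : Set V}
    (hS : ∀ a b, CliqueAdj G r a b → a ∈ S → b ∈ S) (hx0 : 0 ≤ x)
    (hx : r * cliquePoly G r x = cliqueSpecRad G r * ∑ v, x v ^ r) :
    r * cliquePoly G r (S.indicator x) = cliqueSpecRad G r * ∑ v, S.indicator x v ^ r := by
  have hpoly : cliquePoly G r (S.indicator x) + cliquePoly G r (Sᶜ.indicator x) =
      cliquePoly G r x := by
    rw [cliquePoly, cliquePoly, cliquePoly, ← sum_add_distrib]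
    refine sum_congr rfl fun K hK => ?_
    have hK := mem_rCliques.1 hK
    exact prod_indicator_add_prod_indicator_compl (card_pos.1 (by rw [hK.card_eq]; omega))
      fun a ha b hb haS => hS a b ⟨K, hK, ha, hb⟩ haS
  have hnorm : ∑ v, S.indicator x v ^ r + ∑ v, Sᶜ.indicator x v ^ r = ∑ v, x v ^ r := by
    rw [← sum_add_distrib]
    refine sum_congr rfl fun v _ => ?_
    by_cases hv : v ∈ S <;> simp [hv, hr]
  have h₁ := mul_cliquePoly_le (G := G) hr (Set.indicator_nonneg fun v _ => hx0 v :
    0 ≤ S.indicator x)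
  have h₂ := mul_cliquePoly_le (G := G) hr (Set.indicator_nonneg fun v _ => hx0 v :
    0 ≤ Sᶜ.indicator x)
  rw [← hpoly, ← hnorm] at hx
  linarith

end Restriction

section ReplaceVertex

variable [DecidableEq V] {u w : V} {K : Finset V}

lemma replaceVertex_adj_swap_iff {a b : V} (ha : a ≠ u) (hb : b ≠ u) :
    (G.replaceVertex w u).Adj (Equiv.swap u w a) (Equiv.swap u w b) ↔ G.Adj a b := by
  unfold replaceVertex
  simp only [Equiv.swap_apply_def]
  split_ifs <;> simp_all [G.adj_comm]

lemma SimpleGraph.IsNClique.replaceVertex_map_swap (hK : G.IsNClique r K) (hu : u ∉ K) :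
    (G.replaceVertex w u).IsNClique r (K.map (Equiv.swap u w).toEmbedding) := by
  refine ⟨?_, by rw [card_map, hK.card_eq]⟩
  rintro _ ha' _ hb' hab
  obtain ⟨a, ha, rfl⟩ := mem_map.1 ha'
  obtain ⟨b, hb, rfl⟩ := mem_map.1 hb'
  exact (replaceVertex_adj_swap_iff (ne_of_mem_of_not_mem ha hu) (ne_of_mem_of_not_mem hb hu)).2
    (hK.1 ha hb fun h => hab (h ▸ rfl))

lemma SimpleGraph.IsNClique.replaceVertex (hK : G.IsNClique r K) (hu : u ∉ K) :
    (G.replaceVertex w u).IsNClique r K := by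
  refine ⟨fun a ha b hb hab => ?_, hK.card_eq⟩
  exact (G.adj_replaceVertex_iff_of_ne w (ne_of_mem_of_not_mem ha hu)
    (ne_of_mem_of_not_mem hb hu)).2 (hK.1 ha hb hab)

variable [Fintype V]

/-- Each `r`-clique avoiding `u` survives in `G.replaceVertex w u`, and each one through `w` also
has a copy through `u`, obtained by swapping `u` and `w`. -/
lemma sum_le_cliquePoly_replaceVertex {y : V → ℝ} (hy : 0 ≤ y) (hyuw : y u = y w) :
    ∑ L ∈ (rCliques G r).filter (u ∉ ·), (∏ i ∈ L, y i + if w ∈ L then ∏ i ∈ L, y i else 0) ≤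
      cliquePoly (G.replaceVertex w u) r y := by
  set C := (rCliques G r).filter (u ∉ ·)
  set e := (Equiv.swap u w).toEmbedding
  set C' := (C.filter (w ∈ ·)).image (·.map e)
  have hdisj : Disjoint C C' := by
    refine disjoint_left.2 fun L hL hL' => ?_
    obtain ⟨L, hwL, rfl⟩ := mem_image.1 hL'
    exact (mem_filter.1 hL).2 (mem_map.2 ⟨w, (mem_filter.1 hwL).2, by simp [e]⟩)
  have hsub : C ∪ C' ⊆ rCliques (G.replaceVertex w u) r := by
    intro L hL
    rcases mem_union.1 hL with hL | hL
    · obtain ⟨hL, hu⟩ := mem_filter.1 hL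
      exact mem_rCliques.2 ((mem_rCliques.1 hL).replaceVertex hu)
    · obtain ⟨L, hLw, rfl⟩ := mem_image.1 hL
      obtain ⟨hL, hu⟩ := mem_filter.1 (mem_filter.1 hLw).1
      exact mem_rCliques.2 ((mem_rCliques.1 hL).replaceVertex_map_swap hu)
  have hswap : ∀ L : Finset V, ∏ i ∈ L.map e, y i = ∏ i ∈ L, y i := fun L => by
    rw [prod_map]
    refine prod_congr rfl fun i _ => ?_
    simp only [e, Equiv.coe_toEmbedding, Equiv.swap_apply_def]
    split_ifs <;> simp_all
  calc _ = ∑ L ∈ C, ∏ i ∈ L, y i + ∑ L ∈ C.filter (w ∈ ·), ∏ i ∈ L, y i := by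
        rw [sum_add_distrib, sum_filter (s := C)]
    _ = ∑ L ∈ C ∪ C', ∏ i ∈ L, y i := by
        rw [sum_union hdisj, sum_image fun L _ L' _ h => Finset.map_injective e h]
        simp only [hswap]
    _ ≤ _ := sum_le_sum_of_subset_of_nonneg hsub fun L _ _ => prod_nonneg fun i _ => hy i

end ReplaceVertex

lemma one_lt_two_div_two_rpow_inv (hr : 1 < r) : 1 < 2 / (2 : ℝ) ^ (r⁻¹ : ℝ) := by
  rw [one_lt_div (by positivity)]
  calc (2 : ℝ) ^ (r⁻¹ : ℝ) < 2 ^ (1 : ℝ) :=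
        Real.rpow_lt_rpow_of_exponent_lt one_lt_two (inv_lt_one_of_one_lt₀ (by exact_mod_cast hr))
    _ = 2 := Real.rpow_one 2

section Extremal

variable [Fintype V] [DecidableEq V] {u w : V} {K : Finset V} {z : V → ℝ}

lemma exists_cliquePoly_lt_replaceVertex (hr : 2 ≤ r) (hz : 0 ≤ z) (hzu : z u = 0)
    (hK : G.IsNClique r K) (hw : w ∈ K) (hpos : 0 < ∏ i ∈ K, z i) :
    ∃ y : V → ℝ, 0 ≤ y ∧ ∑ v, y v ^ r = ∑ v, z v ^ r ∧
      cliquePoly G r z < cliquePoly (G.replaceVertex w u) r y := by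
  have huw : u ≠ w := by
    rintro rfl
    exact hpos.ne' (prod_eq_zero hw hzu)
  set c : ℝ := 2 ^ (r⁻¹ : ℝ)
  have hc : 1 < 2 / c := one_lt_two_div_two_rpow_inv hr
  have hcr : c ^ r = 2 := Real.rpow_inv_natCast_pow zero_le_two (by omega)
  set y : V → ℝ := fun v => if v = u ∨ v = w then z w / c else z v
  have hy : 0 ≤ y := fun v => by
    dsimp only [y]
    split_ifs
    · exact div_nonneg (hz w) (by positivity)
    · exact hz v
  have hsum : ∑ v, (y v ^ r - z v ^ r) = 0 := by
    rw [Fintype.sum_eq_add u w huw fun v hv => by simp [y, hv.1, hv.2]]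
    simp [y, hzu, div_pow, hcr, zero_pow (by omega : r ≠ 0)]
    ring
  have hyz : ∀ v, v ≠ u → v ≠ w → y v = z v := fun v hu hw => if_neg (by tauto)
  set C := (rCliques G r).filter (u ∉ ·)
  have hprod : ∀ L ∈ C, w ∈ L → ∏ i ∈ L, y i + ∏ i ∈ L, y i = 2 / c * ∏ i ∈ L, z i := by
    intro L hL hwL
    have hrest : ∏ i ∈ L.erase w, y i = ∏ i ∈ L.erase w, z i := prod_congr rfl fun i hi =>
      hyz i (ne_of_mem_of_not_mem (mem_of_mem_erase hi) (mem_filter.1 hL).2) (ne_of_mem_erase hi)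
    rw [← mul_prod_erase L y hwL, ← mul_prod_erase L z hwL, hrest, show y w = z w / c by simp [y]]
    ring
  have hprod' : ∀ L ∈ C, w ∉ L → ∏ i ∈ L, y i = ∏ i ∈ L, z i := fun L hL hwL =>
    prod_congr rfl fun i hi =>
      hyz i (ne_of_mem_of_not_mem hi (mem_filter.1 hL).2) (ne_of_mem_of_not_mem hi hwL)
  have hKC : K ∈ C := mem_filter.2 ⟨mem_rCliques.2 hK, fun hu => hpos.ne' (prod_eq_zero hu hzu)⟩
  refine ⟨y, hy, by rw [sum_sub_distrib] at hsum; linarith, ?_⟩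
  calc cliquePoly G r z = ∑ L ∈ C, ∏ i ∈ L, z i := cliquePoly_eq_sum_filter_notMem hzu
    _ < ∑ L ∈ C, (∏ i ∈ L, y i + if w ∈ L then ∏ i ∈ L, y i else 0) := by
        refine sum_lt_sum (fun L hL => ?_) ⟨K, hKC, ?_⟩
        · by_cases hwL : w ∈ L
          · rw [if_pos hwL, hprod L hL hwL]
            exact le_mul_of_one_le_left (prod_nonneg fun i _ => hz i) hc.le
          · rw [if_neg hwL, add_zero, hprod' L hL hwL]
        · rw [if_pos hw, hprod K hKC hw]
          exact lt_mul_of_one_lt_left hpos hc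
    _ ≤ _ := sum_le_cliquePoly_replaceVertex hy (by simp [y])

lemma exists_cliqueSpecRad_lt (hr : 2 ≤ r) (hG : G.CliqueFree (r + 1)) (hz0 : 0 ≤ z)
    (hz : r * cliquePoly G r z = cliqueSpecRad G r * ∑ v, z v ^ r) (hzu : z u = 0)
    (hK : G.IsNClique r K) (hpos : 0 < ∏ i ∈ K, z i) :
    ∃ H : SimpleGraph V, H.CliqueFree (r + 1) ∧ cliqueSpecRad G r < cliqueSpecRad H r := by
  obtain ⟨w, hw⟩ := card_pos.1 (by rw [hK.card_eq]; omega)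
  obtain ⟨y, hy0, hy, hlt⟩ := exists_cliquePoly_lt_replaceVertex hr hz0 hzu hK hw hpos
  have hnorm : 0 ≤ ∑ v, z v ^ r := sum_nonneg fun v _ => pow_nonneg (hz0 v) r
  refine ⟨G.replaceVertex w u, hG.replaceVertex w u, lt_of_mul_lt_mul_right ?_ hnorm⟩
  calc cliqueSpecRad G r * ∑ v, z v ^ r = r * cliquePoly G r z := hz.symm
    _ < r * cliquePoly (G.replaceVertex w u) r y := by gcongr
    _ ≤ cliqueSpecRad (G.replaceVertex w u) r * ∑ v, y v ^ r := mul_cliquePoly_le (by omega) hy0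
    _ = cliqueSpecRad (G.replaceVertex w u) r * ∑ v, z v ^ r := by rw [hy]

lemma cliqueConnected_of_forall_cliqueSpecRad_le (hr : 2 ≤ r) (hG : G.CliqueFree (r + 1))
    (hmax : ∀ H : SimpleGraph V, H.CliqueFree (r + 1) → cliqueSpecRad H r ≤ cliqueSpecRad G r)
    {x : V → ℝ} (hx0 : 0 ≤ x) (hx : r * cliquePoly G r x = cliqueSpecRad G r * ∑ v, x v ^ r)
    (hpos : 0 < cliquePoly G r x) : CliqueConnected G r := by
  obtain ⟨K, hK, hKpos⟩ : ∃ K ∈ rCliques G r, 0 < ∏ i ∈ K, x i :=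
    exists_lt_of_sum_lt (by simpa [cliquePoly] using hpos)
  replace hK := mem_rCliques.1 hK
  obtain ⟨w, hw⟩ := card_pos.1 (by rw [hK.card_eq]; omega)
  refine cliqueConnected_of_transGen w fun u => ?_
  by_contra hu
  set S := {v | Relation.TransGen (CliqueAdj G r) w v}
  have hS : ∀ a b, CliqueAdj G r a b → a ∈ S → b ∈ S := fun _ _ hab ha => ha.tail hab
  have hKS : ∀ i ∈ K, S.indicator x i = x i := fun i hi =>
    Set.indicator_of_mem (Relation.TransGen.single ⟨K, hK, hw, hi⟩) x
  obtain ⟨H, hH, hlt⟩ := exists_cliqueSpecRad_lt hr hG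
    (Set.indicator_nonneg fun v _ => hx0 v) (mul_cliquePoly_indicator_eq (by omega) hS hx0 hx)
    (Set.indicator_of_notMem hu x) hK (by rwa [prod_congr rfl hKS])
  exact (hmax H hH).not_gt hlt

end Extremal

theorem stmt_7 (r n : ℕ) (hr : 2 ≤ r) (hn : r ≤ n) (G' : SimpleGraph (Fin n))
    (hfree : G'.CliqueFree (r + 1))
    (hmax : ∀ H : SimpleGraph (Fin n), H.CliqueFree (r + 1) →
      cliqueSpecRad H r ≤ cliqueSpecRad G' r) :
    CliqueConnected G' r := by
  have : Nonempty (Fin n) := ⟨⟨0, by omega⟩⟩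
  obtain ⟨x, hx0, hx1, hx⟩ := exists_mul_cliquePoly_eq (G := G') (by omega : r ≠ 0)
  have hturan : ¬ (turanGraph n r).CliqueFree r :=
    not_cliqueFree_of_isTuranMaximal (by simpa) (isTuranMaximal_turanGraph (by omega))
  have hρ : 1 ≤ cliqueSpecRad G' r :=
    (one_le_cliqueSpecRad_of_not_cliqueFree (by omega) hturan).trans
      (hmax _ (turanGraph_cliqueFree (by omega)))
  refine cliqueConnected_of_forall_cliqueSpecRad_le hr hfree hmax hx0 (by rw [hx1, mul_one, hx]) ?_
  exact pos_of_mul_pos_right (by linarith : (0 : ℝ) < r * cliquePoly G' r x) (Nat.cast_nonneg r)
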